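/- arXiv:1511.07036 — 2 statements merged into one kernel-verified Lean document; each statement's English description precedes it below -/
import Mathlib

section
/- A probability distribution on a bounded interval [a, b] of the real line is uniquely determined by its sequence of moments: if two probability measures supported on [a, b] have equal r-th moments for all nonnegative integers r, then they are equal. -/
/-!
Integration against `μ` and against `ν` are bounded linear functionals on `C([a, b])` that agree
on polynomials, since a polynomial integrates to the corresponding combination of moments. By the
Weierstrass approximation theorem they agree on every continuous function, and finite Borel
measures on `ℝ` are determined by their integrals of bounded continuous functions.
-/

open MeasureTheory Polynomial Set

theorem ContinuousOn.integrable_of_ae_mem {X E : Type*} [TopologicalSpace X] [T2Space X]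
    [MeasurableSpace X] [OpensMeasurableSpace X] [NormedAddCommGroup E] {μ : Measure X}
    [IsFiniteMeasureOnCompacts μ] {K : Set X} {f : X → E} (hK : IsCompact K)
    (hμ : ∀ᵐ x ∂μ, x ∈ K) (hf : ContinuousOn f K) : Integrable f μ := by
  rw [← Measure.restrict_eq_self_of_ae_mem hμ]
  exact hf.integrableOn_compact hK

theorem dist_integral_le_of_ae_dist_le {α E : Type*} [MeasurableSpace α] [NormedAddCommGroup E]
    [NormedSpace ℝ E] {μ : Measure α} [IsProbabilityMeasure μ] {f g : α → E} {C : ℝ}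
    (hf : Integrable f μ) (hg : Integrable g μ) (h : ∀ᵐ x ∂μ, dist (f x) (g x) ≤ C) :
    dist (∫ x, f x ∂μ) (∫ x, g x ∂μ) ≤ C := by
  rw [dist_eq_norm, ← integral_sub hf hg]
  simpa using norm_integral_le_of_norm_le_const (μ := μ) (f := f - g)
    (h.mono fun x hx => by rwa [Pi.sub_apply, ← dist_eq_norm])

theorem Polynomial.integral_eval_eq_sum_moments {α : Type*} [MeasurableSpace α]
    {μ : Measure α} (p : ℝ[X]) {φ : α → ℝ} (hφ : ∀ i : ℕ, Integrable (fun x => φ x ^ i) μ) :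
    ∫ x, p.eval (φ x) ∂μ = ∑ i ∈ Finset.range (p.natDegree + 1), p.coeff i * ∫ x, φ x ^ i ∂μ := by
  simp_rw [eval_eq_sum_range, ← integral_const_mul]
  exact integral_finsetSum _ fun i _ => (hφ i).const_mul _

section Moments

variable {a b : ℝ} {μ ν : Measure ℝ}

theorem integrable_pow_of_ae_mem_Icc [IsFiniteMeasureOnCompacts μ]
    (hμ : ∀ᵐ x ∂μ, x ∈ Icc a b) (i : ℕ) : Integrable (fun x => x ^ i) μ :=
  (continuous_pow i).continuousOn.integrable_of_ae_mem isCompact_Icc hμ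

theorem integral_eq_of_moments_eq [IsProbabilityMeasure μ] [IsProbabilityMeasure ν]
    (hμ : ∀ᵐ x ∂μ, x ∈ Icc a b) (hν : ∀ᵐ x ∂ν, x ∈ Icc a b)
    (h : ∀ r : ℕ, ∫ x, x ^ r ∂μ = ∫ x, x ^ r ∂ν) {g : ℝ → ℝ} (hg : ContinuousOn g (Icc a b)) :
    ∫ x, g x ∂μ = ∫ x, g x ∂ν := by
  refine eq_of_forall_dist_le fun ε hε => ?_
  obtain ⟨p, hp⟩ := exists_polynomial_near_of_continuousOn a b g hg (ε / 2) (half_pos hε)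
  have hpoly : ∫ x, p.eval x ∂μ = ∫ x, p.eval x ∂ν := by
    simp only [p.integral_eval_eq_sum_moments (integrable_pow_of_ae_mem_Icc hμ),
      p.integral_eval_eq_sum_moments (integrable_pow_of_ae_mem_Icc hν), h]
  have hclose : ∀ (κ : Measure ℝ) [IsProbabilityMeasure κ], (∀ᵐ x ∂κ, x ∈ Icc a b) →
      dist (∫ x, p.eval x ∂κ) (∫ x, g x ∂κ) ≤ ε / 2 := fun κ _ hκ =>
    dist_integral_le_of_ae_dist_le
      (p.continuous.continuousOn.integrable_of_ae_mem isCompact_Icc hκ)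
      (hg.integrable_of_ae_mem isCompact_Icc hκ)
      (hκ.mono fun x hx => (hp x hx).le)
  calc dist (∫ x, g x ∂μ) (∫ x, g x ∂ν)
      ≤ dist (∫ x, g x ∂μ) (∫ x, p.eval x ∂μ) + dist (∫ x, p.eval x ∂μ) (∫ x, g x ∂ν) :=
        dist_triangle _ _ _
    _ = dist (∫ x, p.eval x ∂μ) (∫ x, g x ∂μ) + dist (∫ x, p.eval x ∂ν) (∫ x, g x ∂ν) := by
        rw [dist_comm (∫ x, g x ∂μ), hpoly]
    _ ≤ ε / 2 + ε / 2 := add_le_add (hclose μ hμ) (hclose ν hν)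
    _ = ε := add_halves ε

end Moments

/-- A probability measure supported on a bounded interval `[a, b]` is uniquely
determined by its moments. -/
theorem stmt_9 (a b : ℝ) (μ ν : Measure ℝ)
    [IsProbabilityMeasure μ] [IsProbabilityMeasure ν]
    (hμ : μ (Set.Icc a b)ᶜ = 0) (hν : ν (Set.Icc a b)ᶜ = 0)
    (h : ∀ r : ℕ, ∫ x, x ^ r ∂μ = ∫ x, x ^ r ∂ν) :
    μ = ν :=
  ext_of_forall_integral_eq_of_IsFiniteMeasure fun f =>
    integral_eq_of_moments_eq (mem_ae_iff.mpr hμ) (mem_ae_iff.mpr hν) h f.continuous.continuousOn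
end

section
/- Let (R_1,…,R_n) be Dirichlet D_n(1,…,1), and let X_1,…,X_n and Y_1,…,Y_n each be families of i.i.d. random variables supported in [0,1], both independent of (R_1,…,R_n). If Σ R_i X_i and Σ R_i Y_i have the same distribution, then X_1 and Y_1 have the same distribution. -/
open MeasureTheory ProbabilityTheory

def stdSimplexSet (n : ℕ) : Set (Fin n → ℝ) :=
  {r | (∀ i, 0 ≤ r i) ∧ ∑ i, r i = 1}

/-- Dirichlet `D_n(1,…,1)`: uniform probability on the standard simplex. -/
noncomputable def dirichletOne (n : ℕ) : Measure (Fin n → ℝ) :=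
  (μH[(n : ℝ) - 1] (stdSimplexSet n))⁻¹ • (μH[(n : ℝ) - 1]).restrict (stdSimplexSet n)

/-!
Expanding `(∑ Rᵢ Zᵢ)^r` over words `f : Fin r → Fin n` and using independence, `E[(∑ Rᵢ Xᵢ)^r]`
is a combination of products of moments of `X₁` of order `< r`, plus `(∑ᵢ E[Rᵢ^r]) E[X₁^r]`
coming from the constant words. As `R` lives on the simplex, `∑ᵢ E[Rᵢ^r] > 0`, so the moments
of `X₁` are determined recursively by those of `∑ Rᵢ Xᵢ`. By Weierstrass approximation, a law
on `[0, 1]` is determined by its moments.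
-/

open Finset

section MomentDeterminacy

variable {a b : ℝ}

lemma Continuous.integrable_of_ae_mem_Icc {ν : Measure ℝ} [IsFiniteMeasure ν] {f : ℝ → ℝ}
    (hf : Continuous f) (hν : ∀ᵐ x ∂ν, x ∈ Set.Icc a b) : Integrable f ν := by
  rw [← Measure.restrict_eq_self_of_ae_mem hν]
  exact hf.continuousOn.integrableOn_compact isCompact_Icc

lemma integral_eval_eq_of_moments_eq {ν₁ ν₂ : Measure ℝ} [IsFiniteMeasure ν₁]
    [IsFiniteMeasure ν₂] (h₁ : ∀ᵐ x ∂ν₁, x ∈ Set.Icc a b) (h₂ : ∀ᵐ x ∂ν₂, x ∈ Set.Icc a b)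
    (hmom : ∀ k : ℕ, ∫ x, x ^ k ∂ν₁ = ∫ x, x ^ k ∂ν₂) (p : Polynomial ℝ) :
    ∫ x, p.eval x ∂ν₁ = ∫ x, p.eval x ∂ν₂ := by
  simp_rw [Polynomial.eval_eq_sum_range]
  rw [integral_finsetSum _ fun k _ =>
      ((continuous_pow k).integrable_of_ae_mem_Icc h₁).const_mul _,
    integral_finsetSum _ fun k _ =>
      ((continuous_pow k).integrable_of_ae_mem_Icc h₂).const_mul _]
  simp_rw [integral_const_mul, hmom]

lemma abs_integral_sub_integral_le {ν : Measure ℝ} [IsFiniteMeasure ν]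
    (hν : ∀ᵐ x ∂ν, x ∈ Set.Icc a b) {f g : ℝ → ℝ} (hf : Continuous f) (hg : Continuous g)
    {ε : ℝ} (hfg : ∀ x ∈ Set.Icc a b, |f x - g x| < ε) :
    |∫ x, f x ∂ν - ∫ x, g x ∂ν| ≤ ε * ν.real Set.univ := by
  rw [← integral_sub (hf.integrable_of_ae_mem_Icc hν) (hg.integrable_of_ae_mem_Icc hν)]
  exact norm_integral_le_of_norm_le_const (f := fun x => f x - g x)
    (hν.mono fun x hx => (hfg x hx).le)

lemma integral_eq_of_moments_eq_s16 {ν₁ ν₂ : Measure ℝ} [IsFiniteMeasure ν₁]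
    [IsFiniteMeasure ν₂] (h₁ : ∀ᵐ x ∂ν₁, x ∈ Set.Icc a b) (h₂ : ∀ᵐ x ∂ν₂, x ∈ Set.Icc a b)
    (hmom : ∀ k : ℕ, ∫ x, x ^ k ∂ν₁ = ∫ x, x ^ k ∂ν₂) {f : ℝ → ℝ} (hf : Continuous f) :
    ∫ x, f x ∂ν₁ = ∫ x, f x ∂ν₂ := by
  refine eq_of_forall_dist_le fun ε hε => ?_
  set C := ν₁.real Set.univ + ν₂.real Set.univ + 1
  have hC : 0 < C := by positivity
  obtain ⟨p, hp⟩ := exists_polynomial_near_of_continuousOn a b f hf.continuousOn (ε / C)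
    (div_pos hε hC)
  have e₁ := abs_integral_sub_integral_le h₁ p.continuous hf hp
  have e₂ := abs_integral_sub_integral_le h₂ p.continuous hf hp
  rw [integral_eval_eq_of_moments_eq h₁ h₂ hmom p] at e₁
  calc dist (∫ x, f x ∂ν₁) (∫ x, f x ∂ν₂)
      ≤ ε / C * ν₁.real Set.univ + ε / C * ν₂.real Set.univ := by
        rw [Real.dist_eq]
        exact (abs_sub_le _ _ _).trans (add_le_add ((abs_sub_comm _ _).trans_le e₁) e₂)
    _ ≤ ε := by
        rw [← mul_add, div_mul_eq_mul_div, div_le_iff₀ hC]; nlinarith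

theorem measure_eq_of_moments_eq {ν₁ ν₂ : Measure ℝ} [IsFiniteMeasure ν₁]
    [IsFiniteMeasure ν₂] (h₁ : ∀ᵐ x ∂ν₁, x ∈ Set.Icc a b) (h₂ : ∀ᵐ x ∂ν₂, x ∈ Set.Icc a b)
    (hmom : ∀ k : ℕ, ∫ x, x ^ k ∂ν₁ = ∫ x, x ^ k ∂ν₂) : ν₁ = ν₂ :=
  ext_of_forall_integral_eq_of_IsFiniteMeasure fun f =>
    integral_eq_of_moments_eq_s16 h₁ h₂ hmom f.continuous

end MomentDeterminacy

section FiberMoments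

lemma sum_mul_pow_eq_sum_prod_mul_prod {ι R : Type*} [Fintype ι] [CommSemiring R] (x y : ι → R)
    (r : ℕ) : (∑ i, x i * y i) ^ r = ∑ f : Fin r → ι, (∏ j, x (f j)) * ∏ j, y (f j) := by
  simp_rw [Fintype.sum_pow, prod_mul_distrib]

variable {ι : Type*} [Fintype ι] [DecidableEq ι] {r : ℕ}

lemma prod_comp_eq_prod_pow_card_fiber {M : Type*} [CommMonoid M] (y : ι → M) (f : Fin r → ι) :
    ∏ j, y (f j) = ∏ i, y i ^ #{j | f j = i} := by
  simp_rw [← prod_const]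
  exact (prod_fiberwise' univ f y).symm

/-- The product `∏ E[X^{i_j}]` of the moment recursion, indexed by words `f` of length `r`
rather than by compositions `i_1 + ⋯ + i_n = r`. -/
noncomputable def fiberMomentProd (ν : Measure ℝ) (f : Fin r → ι) : ℝ :=
  ∏ i, ∫ x, x ^ #{j | f j = i} ∂ν

lemma fiberMomentProd_const (ν : Measure ℝ) [IsProbabilityMeasure ν] (i : ι) :
    fiberMomentProd ν (fun _ : Fin r => i) = ∫ x, x ^ r ∂ν := by
  rw [fiberMomentProd, prod_eq_single i (fun i' _ hi' => by simp [Ne.symm hi']) (by simp)]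
  simp

lemma fiberMomentProd_eq_of_ne_const {ν₁ ν₂ : Measure ℝ}
    (hlow : ∀ k < r, ∫ x, x ^ k ∂ν₁ = ∫ x, x ^ k ∂ν₂) {f : Fin r → ι}
    (hf : ∀ i, f ≠ fun _ => i) : fiberMomentProd ν₁ f = fiberMomentProd ν₂ f := by
  refine prod_congr rfl fun i _ => hlow _ ?_
  obtain ⟨j, hj⟩ : ∃ j, f j ≠ i := by
    by_contra! h
    exact hf i (funext h)
  simpa using card_lt_card (filter_ssubset.2 ⟨j, mem_univ j, hj⟩)

lemma sum_mul_fiberMomentProd_sub {ν₁ ν₂ : Measure ℝ} [IsProbabilityMeasure ν₁]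
    [IsProbabilityMeasure ν₂] (hr : 0 < r) (hlow : ∀ k < r, ∫ x, x ^ k ∂ν₁ = ∫ x, x ^ k ∂ν₂)
    (c : (Fin r → ι) → ℝ) :
    ∑ f, c f * fiberMomentProd ν₁ f - ∑ f, c f * fiberMomentProd ν₂ f
      = (∑ i, c fun _ => i) * (∫ x, x ^ r ∂ν₁ - ∫ x, x ^ r ∂ν₂) := by
  -- only the constant words involve the `r`-th moments
  have hinj : Function.Injective fun (i : ι) (_ : Fin r) => i :=
    fun i i' h => congrFun h ⟨0, hr⟩
  rw [← sum_sub_distrib, sum_mul, ← sum_subset (subset_univ (univ.image fun i _ => i)),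
    sum_image fun i _ i' _ h => hinj h]
  · simp_rw [fiberMomentProd_const, mul_sub]
  · intro f _ hf
    rw [fiberMomentProd_eq_of_ne_const hlow (fun i h => hf (mem_image.2 ⟨i, mem_univ _, h.symm⟩)),
      sub_self]

end FiberMoments

lemma prod_mem_Icc_zero_one {ι : Type*} {s : Finset ι} {g : ι → ℝ}
    (h : ∀ i ∈ s, g i ∈ Set.Icc 0 1) : ∏ i ∈ s, g i ∈ Set.Icc (0 : ℝ) 1 :=
  ⟨prod_nonneg fun i hi => (h i hi).1, prod_le_one (fun i hi => (h i hi).1) fun i hi => (h i hi).2⟩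

section RandomSums

variable {Ω ι : Type*} [MeasurableSpace Ω] {μ : Measure Ω} [Fintype ι]

lemma ProbabilityTheory.iIndepFun.integral_prod_comp_eq_fiberMomentProd [DecidableEq ι]
    {Z : ι → Ω → ℝ} (hZ : ∀ i, Measurable (Z i)) (hZindep : iIndepFun Z μ) {ν : Measure ℝ}
    (hZlaw : ∀ i, μ.map (Z i) = ν) {r : ℕ} (f : Fin r → ι) :
    ∫ ω, ∏ j, Z (f j) ω ∂μ = fiberMomentProd ν f := by
  have hfiber : ∀ ω, ∏ j, Z (f j) ω = ∏ i, Z i ω ^ #{j | f j = i} := fun ω =>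
    prod_comp_eq_prod_pow_card_fiber (Z · ω) f
  simp_rw [hfiber]
  rw [hZindep.integral_fun_prod_comp (f := fun i x => x ^ #{j | f j = i})
    (fun i => (hZ i).aemeasurable) (fun i => by fun_prop)]
  refine prod_congr rfl fun i _ => ?_
  rw [← hZlaw i, integral_map (hZ i).aemeasurable (by fun_prop)]

theorem integral_sum_mul_pow_eq [IsProbabilityMeasure μ] [DecidableEq ι] {R : Ω → ι → ℝ}
    (hR : Measurable R) (hR01 : ∀ᵐ ω ∂μ, ∀ i, R ω i ∈ Set.Icc 0 1)
    {Z : ι → Ω → ℝ} (hZ : ∀ i, Measurable (Z i))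
    (hZ01 : ∀ i, ∀ᵐ ω ∂μ, Z i ω ∈ Set.Icc 0 1) (hZindep : iIndepFun Z μ) {ν : Measure ℝ}
    (hZlaw : ∀ i, μ.map (Z i) = ν) (hRZ : IndepFun R (fun ω i => Z i ω) μ) (r : ℕ) :
    ∫ ω, (∑ i, R ω i * Z i ω) ^ r ∂μ
      = ∑ f : Fin r → ι, (∫ ω, ∏ j, R ω (f j) ∂μ) * fiberMomentProd ν f := by
  have hRZ01 : ∀ᵐ ω ∂μ, ∀ i, R ω i ∈ Set.Icc 0 1 ∧ Z i ω ∈ Set.Icc 0 1 := by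
    filter_upwards [hR01, ae_all_iff.2 hZ01] with ω hR hZ i using ⟨hR i, hZ i⟩
  simp_rw [sum_mul_pow_eq_sum_prod_mul_prod]
  rw [integral_finsetSum _ fun f _ => ?_]
  · refine sum_congr rfl fun f _ => ?_
    rw [hRZ.integral_fun_comp_mul_comp (f := fun x => ∏ j, x (f j))
        (g := fun z => ∏ j, z (f j)) hR.aemeasurable (by fun_prop)
        (Measurable.aestronglyMeasurable (by fun_prop))
        (Measurable.aestronglyMeasurable (by fun_prop)),
      hZindep.integral_prod_comp_eq_fiberMomentProd hZ hZlaw f]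
  · refine .of_mem_Icc 0 1 (by fun_prop) ?_
    filter_upwards [hRZ01] with ω h
    have hR := prod_mem_Icc_zero_one fun j (_ : j ∈ univ) => (h (f j)).1
    have hZ := prod_mem_Icc_zero_one fun j (_ : j ∈ univ) => (h (f j)).2
    exact ⟨mul_nonneg hR.1 hZ.1, mul_le_one₀ hR.2 hZ.1 hZ.2⟩

lemma sum_integral_pow_pos [IsProbabilityMeasure μ] [Nonempty ι] {R : Ω → ι → ℝ}
    (hR : Measurable R) (hRs : ∀ᵐ ω ∂μ, R ω ∈ stdSimplex ℝ ι) (r : ℕ) :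
    0 < ∑ i, ∫ ω, R ω i ^ r ∂μ := by
  have hlow : ∀ᵐ ω ∂μ, (1 / Fintype.card ι : ℝ) ^ r ≤ ∑ i, R ω i ^ r := by
    filter_upwards [hRs] with ω hω
    obtain ⟨i, -, hi⟩ := exists_le_of_sum_le univ_nonempty
      (f := fun _ => 1 / (Fintype.card ι : ℝ)) (g := R ω) (by simp [hω.2])
    exact (pow_le_pow_left₀ (by positivity) hi r).trans
      (single_le_sum (fun j _ => pow_nonneg (hω.1 j) r) (mem_univ i))
  have hint : ∀ i, Integrable (fun ω => R ω i ^ r) μ := fun i =>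
    .of_mem_Icc 0 1 (by fun_prop) (hRs.mono fun ω hω =>
      ⟨pow_nonneg (hω.1 i) r, pow_le_one₀ (hω.1 i) (mem_Icc_of_mem_stdSimplex hω i).2⟩)
  rw [← integral_finsetSum _ fun i _ => hint i]
  calc (0 : ℝ) < ∫ _, (1 / Fintype.card ι : ℝ) ^ r ∂μ := by
        rw [integral_const, probReal_univ, one_smul]; positivity
    _ ≤ _ := integral_mono_ae (integrable_const _) (integrable_finsetSum _ fun i _ => hint i) hlow

end RandomSums

lemma ae_mem_stdSimplexSet_of_map_eq_dirichletOne {Ω : Type*} [MeasurableSpace Ω]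
    {μ : Measure Ω} {n : ℕ} {R : Ω → Fin n → ℝ} (hR : AEMeasurable R μ)
    (hlaw : μ.map R = dirichletOne n) : ∀ᵐ ω ∂μ, R ω ∈ stdSimplexSet n :=
  ae_of_ae_map hR (hlaw ▸ Measure.ae_smul_measure
    (ae_restrict_mem (isClosed_stdSimplex ℝ (Fin n)).measurableSet) _)

theorem stmt_16_general {Ω : Type*} [MeasurableSpace Ω] (μ : Measure Ω) [IsProbabilityMeasure μ]
    (n : ℕ)
    (R : Ω → Fin n → ℝ) (hRmeas : Measurable R)
    (hRlaw : Measure.map R μ = dirichletOne n)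
    (X Y : Fin n → Ω → ℝ) (hXmeas : ∀ i, Measurable (X i)) (hYmeas : ∀ i, Measurable (Y i))
    (hXindep : iIndepFun X μ)
    (hYindep : iIndepFun Y μ)
    (hXiid : ∀ i j, Measure.map (X i) μ = Measure.map (X j) μ)
    (hYiid : ∀ i j, Measure.map (Y i) μ = Measure.map (Y j) μ)
    (hXbdd : ∀ i, ∀ᵐ ω ∂μ, X i ω ∈ Set.Icc (0 : ℝ) 1)
    (hYbdd : ∀ i, ∀ᵐ ω ∂μ, Y i ω ∈ Set.Icc (0 : ℝ) 1)
    (hRX : IndepFun R (fun ω i => X i ω) μ)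
    (hRY : IndepFun R (fun ω i => Y i ω) μ)
    (hSeq : Measure.map (fun ω => ∑ i, R ω i * X i ω) μ =
        Measure.map (fun ω => ∑ i, R ω i * Y i ω) μ) :
    ∀ i, Measure.map (X i) μ = Measure.map (Y i) μ := by
  intro i₀
  have : Nonempty (Fin n) := ⟨i₀⟩
  have := Measure.isProbabilityMeasure_map (μ := μ) (hXmeas i₀).aemeasurable
  have := Measure.isProbabilityMeasure_map (μ := μ) (hYmeas i₀).aemeasurable
  have hRs := ae_mem_stdSimplexSet_of_map_eq_dirichletOne hRmeas.aemeasurable hRlaw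
  have hR01 : ∀ᵐ ω ∂μ, ∀ i, R ω i ∈ Set.Icc 0 1 := hRs.mono fun ω => mem_Icc_of_mem_stdSimplex
  have hmom : ∀ r : ℕ, ∫ x, x ^ r ∂(μ.map (X i₀)) = ∫ x, x ^ r ∂(μ.map (Y i₀)) := by
    intro r
    induction r using Nat.strong_induction_on with
    | _ r ih =>
    rcases r.eq_zero_or_pos with rfl | hr
    · simp
    have hS := (IdentDistrib.mk (by fun_prop) (by fun_prop) hSeq).comp
      (continuous_pow r).measurable |>.integral_eq
    simp only [Function.comp_def] at hS
    rw [integral_sum_mul_pow_eq hRmeas hR01 hXmeas hXbdd hXindep (fun i => hXiid i i₀) hRX,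
      integral_sum_mul_pow_eq hRmeas hR01 hYmeas hYbdd hYindep (fun i => hYiid i i₀) hRY,
      ← sub_eq_zero, sum_mul_fiberMomentProd_sub hr ih] at hS
    simp only [prod_const, card_univ, Fintype.card_fin] at hS
    exact sub_eq_zero.1 ((mul_eq_zero.1 hS).resolve_left (sum_integral_pow_pos hRmeas hRs r).ne')
  exact measure_eq_of_moments_eq ((ae_map_iff (hXmeas i₀).aemeasurable measurableSet_Icc).2
    (hXbdd i₀)) ((ae_map_iff (hYmeas i₀).aemeasurable measurableSet_Icc).2 (hYbdd i₀)) hmom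

/-- If `Σ Rᵢ Xᵢ` and `Σ Rᵢ Yᵢ` have the same distribution, where the `Xᵢ` (resp. `Yᵢ`)
are i.i.d. supported in `[0,1]` and independent of the Dirichlet vector `R`, then
`X₁` and `Y₁` have the same distribution. -/
theorem stmt_16 {Ω : Type*} [MeasurableSpace Ω] (μ : Measure Ω) [IsProbabilityMeasure μ]
    (n : ℕ) (hn : 1 ≤ n)
    (R : Ω → Fin n → ℝ) (hRmeas : Measurable R)
    (hRlaw : Measure.map R μ = dirichletOne n)
    (X Y : Fin n → Ω → ℝ) (hXmeas : ∀ i, Measurable (X i)) (hYmeas : ∀ i, Measurable (Y i))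
    (hXindep : iIndepFun X μ)
    (hYindep : iIndepFun Y μ)
    (hXiid : ∀ i j, Measure.map (X i) μ = Measure.map (X j) μ)
    (hYiid : ∀ i j, Measure.map (Y i) μ = Measure.map (Y j) μ)
    (hXbdd : ∀ i, ∀ᵐ ω ∂μ, X i ω ∈ Set.Icc (0 : ℝ) 1)
    (hYbdd : ∀ i, ∀ᵐ ω ∂μ, Y i ω ∈ Set.Icc (0 : ℝ) 1)
    (hRX : IndepFun R (fun ω i => X i ω) μ)
    (hRY : IndepFun R (fun ω i => Y i ω) μ)
    (hSeq : Measure.map (fun ω => ∑ i, R ω i * X i ω) μ =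
        Measure.map (fun ω => ∑ i, R ω i * Y i ω) μ) :
    ∀ i, Measure.map (X i) μ = Measure.map (Y i) μ :=
  stmt_16_general μ n R hRmeas hRlaw X Y hXmeas hYmeas hXindep hYindep hXiid hYiid hXbdd hYbdd hRX
    hRY hSeq
end
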